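/- Let d ∈ ℕ and let k ≥ 2 be an integer, ℓ := ⌊d/2⌋ + k + 1, and let Ψ_{ℓ,k}(x) := ψ_{ℓ,k}(‖x‖₂) be the radial Wendland function on ℝ^d. Then for every 1 ≤ j ≤ d, the pure second partial derivative satisfies ∂_j ∂_j Ψ_{ℓ,k}(x − y)|_{x = y} < 0, and its value (equal to 2b₂, twice the quadratic coefficient of ψ_{ℓ,k}) is independent of j. -/

import Mathlib

/-!
On `[0, 1]` the Wendland function is `c ∫_r^1 s (1-s)^ℓ (s² - r²)^(k-1) ds` with `c > 0`. Expanding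
`(s² - r²)^(k-1)` to second order in `r²` gives `ψ(r) = ψ(0) - c (k-1) A r² + O(r³)` with
`A = ∫_0^1 s^(2k-3) (1-s)^ℓ ds > 0`, and comparing with the polynomial representation forces
`b₁ = 0` and `b₂ = -c (k-1) A < 0`.

Once `b₁ = 0`, every term `b_m ‖v‖^m` is differentiable and the gradient of `Σ b_m ‖v‖^m` is
`S(‖v‖) v` with `S(t) = Σ m b_m t^(m-2)` continuous. Differentiating `S(‖v‖) v_j` at the origin
only sees `S(0) = 2 b₂`, whatever `j` is.
-/

open MeasureTheory

/-- Partial derivative `∂_i f` on `ℝ^d`. -/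
noncomputable def pd {d : ℕ} (i : Fin d) (f : EuclideanSpace ℝ (Fin d) → ℝ) :
    EuclideanSpace ℝ (Fin d) → ℝ :=
  fun x => fderiv ℝ f x (EuclideanSpace.single i 1)

/-- The Wendland function
`ψ_{ℓ,k}(r) = (1/(Γ(k) 2^{k-1})) ∫_r^1 s (1-s)^ℓ (s²-r²)^{k-1} ds` for `0 ≤ r ≤ 1`,
and `0` for `r > 1`. -/
noncomputable def wend (ℓ k : ℕ) (r : ℝ) : ℝ :=
  if r ≤ 1 then
    (1 / (Real.Gamma k * 2 ^ (k - 1))) *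
      ∫ s in r..1, s * (1 - s) ^ ℓ * (s ^ 2 - r ^ 2) ^ (k - 1)
  else 0

open Filter Topology Asymptotics Finset

theorem abs_sub_pow_succ_sub_pow_succ_add_le {x t : ℝ} (hx₀ : 0 ≤ x) (hx₁ : x ≤ 1) (ht₀ : 0 ≤ t)
    (ht₁ : t ≤ 1) (n : ℕ) :
    |(x - t) ^ (n + 1) - x ^ (n + 1) + (n + 1) * x ^ n * t| ≤ (n + 1) ^ 2 * t ^ 2 := by
  induction n with
  | zero => simp [sq_nonneg]
  | succ n ih =>
    have hrec : (x - t) ^ (n + 1 + 1) - x ^ (n + 1 + 1) + (n + 1 + 1) * x ^ (n + 1) * t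
        = (x - t) * ((x - t) ^ (n + 1) - x ^ (n + 1) + (n + 1) * x ^ n * t)
          + (n + 1) * x ^ n * t ^ 2 := by ring
    have hxt : |x - t| ≤ 1 := abs_le.mpr ⟨by linarith, by linarith⟩
    have hxn : x ^ n ≤ 1 := pow_le_one₀ hx₀ hx₁
    push_cast
    rw [hrec]
    calc _ ≤ |x - t| * |(x - t) ^ (n + 1) - x ^ (n + 1) + (n + 1) * x ^ n * t|
          + (n + 1) * x ^ n * t ^ 2 :=
          (abs_add_le _ _).trans_eq <| by
            rw [abs_mul, abs_of_nonneg (by positivity : (0 : ℝ) ≤ (n + 1) * x ^ n * t ^ 2)]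
      _ ≤ 1 * ((n + 1) ^ 2 * t ^ 2) + (n + 1) * 1 * t ^ 2 := by gcongr
      _ ≤ (n + 1 + 1) ^ 2 * t ^ 2 := by nlinarith [sq_nonneg t]

theorem eq_zero_of_abs_sum_le_mul_pow {a : ℕ → ℝ} {n N : ℕ} {D : ℝ} (hnN : n ≤ N)
    (h : ∀ r ∈ Set.Ioc (0 : ℝ) 1, |∑ m ∈ range N, a m * r ^ m| ≤ D * r ^ n) :
    ∀ m < n, a m = 0 := by
  induction n generalizing a N with
  | zero => intros; omega
  | succ n ih =>
    obtain ⟨N, rfl⟩ : ∃ N', N = N' + 1 := ⟨N - 1, by omega⟩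
    have h₀ : a 0 = 0 := by
      have hp : Tendsto (fun r : ℝ => |∑ m ∈ range (N + 1), a m * r ^ m|) (𝓝[>] 0) (𝓝 |a 0|) := by
        have : Continuous fun r : ℝ => |∑ m ∈ range (N + 1), a m * r ^ m| := by fun_prop
        simpa [sum_range_succ'] using this.tendsto 0 |>.mono_left nhdsWithin_le_nhds
      have hq : Tendsto (fun r : ℝ => D * r ^ (n + 1)) (𝓝[>] 0) (𝓝 0) := by
        have : Continuous fun r : ℝ => D * r ^ (n + 1) := by fun_prop
        simpa using this.tendsto 0 |>.mono_left nhdsWithin_le_nhds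
      have hle : ∀ᶠ r in 𝓝[>] (0 : ℝ), |∑ m ∈ range (N + 1), a m * r ^ m| ≤ D * r ^ (n + 1) :=
        mem_of_superset (Ioc_mem_nhdsGT one_pos) h
      exact abs_nonpos_iff.mp (le_of_tendsto_of_tendsto hp hq hle)
    have hshift : ∀ r ∈ Set.Ioc (0 : ℝ) 1, |∑ m ∈ range N, a (m + 1) * r ^ m| ≤ D * r ^ n := by
      intro r hr
      have hsum : ∑ m ∈ range (N + 1), a m * r ^ m = r * ∑ m ∈ range N, a (m + 1) * r ^ m := by
        rw [sum_range_succ', h₀, zero_mul, add_zero, mul_sum]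
        exact sum_congr rfl fun m _ => by ring
      have := h r hr
      rw [hsum, abs_mul, abs_of_pos hr.1, pow_succ] at this
      nlinarith [hr.1]
    rintro (_ | m) hm
    · exact h₀
    · exact ih (by omega) hshift m (by omega)

noncomputable def wendlandKernel (ℓ k : ℕ) (r s : ℝ) : ℝ :=
  s * (1 - s) ^ ℓ * (s ^ 2 - r ^ 2) ^ (k - 1)

noncomputable def wendlandIntegral (ℓ k : ℕ) (r : ℝ) : ℝ :=
  ∫ s in r..1, wendlandKernel ℓ k r s

theorem wend_of_le_one {ℓ k : ℕ} {r : ℝ} (hr : r ≤ 1) :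
    wend ℓ k r = 1 / (Real.Gamma k * 2 ^ (k - 1)) * wendlandIntegral ℓ k r := by
  rw [wend, if_pos hr]
  rfl

section WendlandIntegral

variable (ℓ n : ℕ) {r : ℝ}

theorem intervalIntegrable_wendlandKernel (k : ℕ) (r a b : ℝ) :
    IntervalIntegrable (wendlandKernel ℓ k r) volume a b := by
  apply Continuous.intervalIntegrable
  unfold wendlandKernel
  fun_prop

theorem abs_integral_wendlandKernel_le (h₀ : 0 ≤ r) (h₁ : r ≤ 1) :
    |∫ s in (0 : ℝ)..r, wendlandKernel ℓ (n + 2) r s| ≤ r ^ 3 := by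
  have hbound : ∀ s ∈ Set.uIoc 0 r, ‖wendlandKernel ℓ (n + 2) r s‖ ≤ r ^ 2 := by
    intro s hs
    rw [Set.uIoc_of_le h₀] at hs
    obtain ⟨hs₀, hsr⟩ := hs
    have hdiff : |s ^ 2 - r ^ 2| ≤ r := by
      rw [abs_of_nonpos (by nlinarith)]; nlinarith
    calc _ = |s| * |1 - s| ^ ℓ * |s ^ 2 - r ^ 2| ^ (n + 1) := by
          rw [wendlandKernel, Real.norm_eq_abs, abs_mul, abs_mul, abs_pow, abs_pow]; rfl
      _ ≤ r * 1 * r := by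
          gcongr
          · exact (abs_of_pos hs₀).trans_le hsr
          · exact pow_le_one₀ (abs_nonneg _) (abs_le.mpr ⟨by linarith, by linarith⟩)
          · exact (pow_le_of_le_one (abs_nonneg _) (hdiff.trans h₁) (by omega)).trans hdiff
      _ = r ^ 2 := by ring
  calc _ ≤ r ^ 2 * |r - 0| := intervalIntegral.norm_integral_le_of_norm_le_const hbound
    _ = r ^ 3 := by rw [sub_zero, abs_of_nonneg h₀]; ring

theorem abs_integral_wendlandKernel_sub_le (h₀ : 0 ≤ r) (h₁ : r ≤ 1) :
    |∫ s in (0 : ℝ)..1, (wendlandKernel ℓ (n + 2) r s - wendlandKernel ℓ (n + 2) 0 s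
        + (n + 1) * r ^ 2 * wendlandKernel ℓ (n + 1) 0 s)| ≤ (n + 1) ^ 2 * r ^ 4 := by
  have hbound : ∀ s ∈ Set.uIoc 0 1, ‖wendlandKernel ℓ (n + 2) r s - wendlandKernel ℓ (n + 2) 0 s
      + (n + 1) * r ^ 2 * wendlandKernel ℓ (n + 1) 0 s‖ ≤ (n + 1) ^ 2 * r ^ 4 := by
    intro s hs
    rw [Set.uIoc_of_le zero_le_one] at hs
    obtain ⟨hs₀, hs₁⟩ := hs
    have htaylor := abs_sub_pow_succ_sub_pow_succ_add_le (x := s ^ 2) (t := r ^ 2) (by positivity)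
      (by nlinarith) (by positivity) (by nlinarith) n
    have hfactor : |s * (1 - s) ^ ℓ| ≤ 1 := by
      rw [abs_mul, abs_pow]
      exact mul_le_one₀ (abs_le.mpr ⟨by linarith, hs₁⟩) (by positivity)
        (pow_le_one₀ (abs_nonneg _) (abs_le.mpr ⟨by linarith, by linarith⟩))
    calc _ = |s * (1 - s) ^ ℓ| * |(s ^ 2 - r ^ 2) ^ (n + 1) - (s ^ 2) ^ (n + 1)
          + (n + 1) * (s ^ 2) ^ n * r ^ 2| := by
          simp only [wendlandKernel, Real.norm_eq_abs, ← abs_mul, Nat.add_sub_cancel,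
            show n + 2 - 1 = n + 1 from rfl]
          ring_nf
      _ ≤ 1 * ((n + 1) ^ 2 * (r ^ 2) ^ 2) := by gcongr
      _ = (n + 1) ^ 2 * r ^ 4 := by ring
  simpa using intervalIntegral.norm_integral_le_of_norm_le_const hbound

theorem abs_wendlandIntegral_sub_le (h₀ : 0 ≤ r) (h₁ : r ≤ 1) :
    |wendlandIntegral ℓ (n + 2) r - wendlandIntegral ℓ (n + 2) 0
        + (n + 1) * wendlandIntegral ℓ (n + 1) 0 * r ^ 2| ≤ ((n + 1) ^ 2 + 1) * r ^ 3 := by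
  have hint := intervalIntegrable_wendlandKernel ℓ
  have hsplit : wendlandIntegral ℓ (n + 2) r - wendlandIntegral ℓ (n + 2) 0
        + (n + 1) * wendlandIntegral ℓ (n + 1) 0 * r ^ 2
      = (∫ s in (0 : ℝ)..1, (wendlandKernel ℓ (n + 2) r s - wendlandKernel ℓ (n + 2) 0 s
          + (n + 1) * r ^ 2 * wendlandKernel ℓ (n + 1) 0 s))
        - ∫ s in (0 : ℝ)..r, wendlandKernel ℓ (n + 2) r s := by
    simp only [wendlandIntegral]
    rw [intervalIntegral.integral_add ((hint _ r 0 1).sub (hint _ 0 0 1))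
        ((hint _ 0 0 1).const_mul _), intervalIntegral.integral_sub (hint _ r 0 1) (hint _ 0 0 1),
      intervalIntegral.integral_const_mul,
      ← intervalIntegral.integral_interval_sub_left (hint _ r 0 1) (hint _ r 0 r)]
    ring
  rw [hsplit]
  calc _ ≤ _ := abs_sub _ _
    _ ≤ (n + 1) ^ 2 * r ^ 4 + r ^ 3 := add_le_add
      (abs_integral_wendlandKernel_sub_le ℓ n h₀ h₁) (abs_integral_wendlandKernel_le ℓ n h₀ h₁)
    _ ≤ ((n + 1) ^ 2 + 1) * r ^ 3 := by
      have : r ^ 4 ≤ r ^ 3 := pow_le_pow_of_le_one h₀ h₁ (by norm_num)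
      nlinarith [sq_nonneg ((n : ℝ) + 1)]

theorem wendlandIntegral_zero_pos : 0 < wendlandIntegral ℓ n 0 := by
  refine intervalIntegral.intervalIntegral_pos_of_pos_on
    (intervalIntegrable_wendlandKernel ℓ n 0 0 1)
    (fun s ⟨hs₀, hs₁⟩ => ?_) zero_lt_one
  have : 0 < 1 - s := by linarith
  simp only [wendlandKernel, ne_eq, OfNat.ofNat_ne_zero, not_false_eq_true, zero_pow, sub_zero]
  positivity

end WendlandIntegral

theorem wend_coeff_one_eq_zero_and_coeff_two_neg {ℓ k N : ℕ} (hk : 2 ≤ k) (hN : 3 ≤ N)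
    {b : ℕ → ℝ} (hb : ∀ r : ℝ, 0 ≤ r → r ≤ 1 → wend ℓ k r = ∑ m ∈ range N, b m * r ^ m) :
    b 1 = 0 ∧ b 2 < 0 := by
  obtain ⟨n, rfl⟩ : ∃ n, k = n + 2 := ⟨k - 2, by omega⟩
  set c : ℝ := 1 / (Real.Gamma (n + 2 : ℕ) * 2 ^ (n + 2 - 1))
  set W := wendlandIntegral ℓ (n + 2)
  set A := wendlandIntegral ℓ (n + 1) 0
  have hc : 0 < c := by
    have := Real.Gamma_pos_of_pos (by positivity : (0 : ℝ) < (n + 2 : ℕ))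
    positivity
  set a : ℕ → ℝ := fun m => b m - (if m = 0 then c * W 0 else 0)
    + (if m = 2 then c * ((n + 1) * A) else 0)
  have hbound : ∀ r ∈ Set.Ioc (0 : ℝ) 1,
      |∑ m ∈ range N, a m * r ^ m| ≤ c * ((n + 1) ^ 2 + 1) * r ^ 3 := by
    intro r hr
    have hsum : ∑ m ∈ range N, a m * r ^ m = c * (W r - W 0 + (n + 1) * A * r ^ 2) := by
      simp only [a, add_mul, sub_mul, sum_add_distrib, sum_sub_distrib, ite_mul, zero_mul,
        sum_ite_eq', mem_range, ← hb r hr.1.le hr.2, wend_of_le_one hr.2]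
      simp only [show 0 < N by omega, show 2 < N by omega, if_true]
      ring
    rw [hsum, abs_mul, abs_of_pos hc, mul_assoc c]
    exact mul_le_mul_of_nonneg_left (abs_wendlandIntegral_sub_le ℓ n hr.1.le hr.2) hc.le
  have ha := eq_zero_of_abs_sum_le_mul_pow hN hbound
  have h₁ := ha 1 (by norm_num)
  have h₂ := ha 2 (by norm_num)
  simp only [a, one_ne_zero, OfNat.ofNat_ne_zero, OfNat.one_ne_ofNat, if_true, if_false,
    sub_zero, add_zero] at h₁ h₂
  refine ⟨h₁, ?_⟩
  have hA := wendlandIntegral_zero_pos ℓ (n + 1)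
  nlinarith [mul_pos hc (mul_pos (by positivity : (0 : ℝ) < n + 1) hA)]

theorem hasFDerivAt_smul_apply_zero {𝕜 E F : Type*} [NontriviallyNormedField 𝕜]
    [NormedAddCommGroup E] [NormedSpace 𝕜 E] [NormedAddCommGroup F] [NormedSpace 𝕜 F]
    {a : E → 𝕜} (ha : ContinuousAt a 0) (L : E →L[𝕜] F) :
    HasFDerivAt (fun v => a v • L v) (a 0 • L) 0 := by
  refine .of_isLittleO ?_
  have h1 : (fun v => a v - a 0) =o[𝓝 0] (fun _ => (1 : 𝕜)) :=
    (isLittleO_one_iff 𝕜).mpr (tendsto_sub_nhds_zero_iff.mpr ha)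
  simpa [sub_smul] using h1.smul_isBigO (L.isBigO_id _)

section RadialPolynomial

variable {E : Type*} [NormedAddCommGroup E] [InnerProductSpace ℝ E]

theorem hasFDerivAt_norm_pow (x : E) {m : ℕ} (hm : 2 ≤ m) :
    HasFDerivAt (fun x : E => ‖x‖ ^ m) ((m * ‖x‖ ^ (m - 2)) • innerSL ℝ x) x := by
  have hexp : (m : ℝ) - 2 = ((m - 2 : ℕ) : ℝ) := by push_cast [hm]; ring
  simpa [Real.rpow_natCast, hexp] using
    hasFDerivAt_norm_rpow x (p := m) (by exact_mod_cast hm)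

/- The exponent `m - 2` is truncated; the terms `m = 0, 1` still vanish, through the factor `m`
and through `b 1 = 0`. -/
theorem hasFDerivAt_sum_mul_norm_pow {b : ℕ → ℝ} (hb₁ : b 1 = 0) (N : ℕ) (x : E) :
    HasFDerivAt (fun x : E => ∑ m ∈ range N, b m * ‖x‖ ^ m)
      ((∑ m ∈ range N, b m * m * ‖x‖ ^ (m - 2)) • innerSL ℝ x) x := by
  rw [sum_smul]
  refine HasFDerivAt.fun_sum fun m _ => ?_
  match m, hb₁ with
  | 0, _ => simpa using hasFDerivAt_const (b 0) x
  | 1, hb₁ => simpa [hb₁] using hasFDerivAt_const (0 : ℝ) x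
  | m + 2, _ =>
    simpa [smul_smul, mul_assoc] using
      (hasFDerivAt_norm_pow x (by omega : 2 ≤ m + 2)).const_mul (b (m + 2))

end RadialPolynomial

section PartialDerivative

variable {d : ℕ}

theorem Filter.EventuallyEq.pd {f g : EuclideanSpace ℝ (Fin d) → ℝ} {x : EuclideanSpace ℝ (Fin d)}
    (h : f =ᶠ[𝓝 x] g) (i : Fin d) : pd i f =ᶠ[𝓝 x] pd i g :=
  (h.fderiv (𝕜 := ℝ)).mono fun y hy => by simp only [_root_.pd, hy]

theorem pd_comp_sub (i : Fin d) (f : EuclideanSpace ℝ (Fin d) → ℝ) (a : EuclideanSpace ℝ (Fin d)) :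
    pd i (fun x => f (x - a)) = fun x => pd i f (x - a) := by
  funext x
  simp only [pd, fderiv_comp_sub]

theorem pd_pd_sum_mul_norm_pow_zero {b : ℕ → ℝ} (hb₁ : b 1 = 0) {N : ℕ} (hN : 3 ≤ N) (j : Fin d) :
    pd j (pd j (fun v => ∑ m ∈ range N, b m * ‖v‖ ^ m)) 0 = 2 * b 2 := by
  set S : ℝ → ℝ := fun t => ∑ m ∈ range N, b m * m * t ^ (m - 2)
  have hpd : pd j (fun v => ∑ m ∈ range N, b m * ‖v‖ ^ m)
      = fun v => S ‖v‖ • EuclideanSpace.proj j v := by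
    funext v
    simp [pd, (hasFDerivAt_sum_mul_norm_pow hb₁ N v).fderiv, S, EuclideanSpace.inner_single_right]
  have hS : ContinuousAt (fun v : EuclideanSpace ℝ (Fin d) => S ‖v‖) 0 := by fun_prop
  have hS0 : S 0 = 2 * b 2 := by
    simp only [S]
    rw [sum_eq_single 2]
    · ring
    · intro m _ hm
      match m, hm with
      | 0, _ => simp
      | 1, _ => simp [hb₁]
      | m + 3, _ => simp
    · intro h; exact absurd (mem_range.mpr (by omega)) h
  rw [pd, hpd, (hasFDerivAt_smul_apply_zero hS _).fderiv]
  simp [hS0]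

theorem pd_pd_comp_norm_sub_eq_two_mul_coeff {N : ℕ} (hN : 3 ≤ N) {b : ℕ → ℝ} (hb₁ : b 1 = 0)
    {g : ℝ → ℝ} (hg : ∀ r : ℝ, 0 ≤ r → r ≤ 1 → g r = ∑ m ∈ range N, b m * r ^ m)
    (y : EuclideanSpace ℝ (Fin d)) (j : Fin d) :
    pd j (pd j (fun x => g ‖x - y‖)) y = 2 * b 2 := by
  set F : EuclideanSpace ℝ (Fin d) → ℝ := fun v => ∑ m ∈ range N, b m * ‖v‖ ^ m
  have hloc : (fun x => g ‖x - y‖) =ᶠ[𝓝 y] fun x => F (x - y) := by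
    filter_upwards [Metric.ball_mem_nhds y one_pos] with x hx
    exact hg _ (norm_nonneg _) (mem_ball_iff_norm.mp hx).le
  rw [((hloc.pd j).pd j).eq_of_nhds, pd_comp_sub, pd_comp_sub]
  simpa using pd_pd_sum_mul_norm_pow_zero hb₁ hN j

end PartialDerivative

theorem stmt9_general
    (d k : ℕ) (hk : 2 ≤ k)
    (b : ℕ → ℝ)
    (hb : ∀ r : ℝ, 0 ≤ r → r ≤ 1 →
      wend (d / 2 + k + 1) k r =
        ∑ m ∈ Finset.range (2 * k + (d / 2 + k + 1) + 1), b m * r ^ m)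
    (j : Fin d) :
    (∀ y : EuclideanSpace ℝ (Fin d),
      pd j (pd j (fun x : EuclideanSpace ℝ (Fin d) => wend (d / 2 + k + 1) k ‖x - y‖)) y < 0 ∧
      pd j (pd j (fun x : EuclideanSpace ℝ (Fin d) => wend (d / 2 + k + 1) k ‖x - y‖)) y =
        2 * b 2 ∧
      ∀ j' : Fin d,
        pd j' (pd j' (fun x : EuclideanSpace ℝ (Fin d) => wend (d / 2 + k + 1) k ‖x - y‖)) y =
          pd j (pd j (fun x : EuclideanSpace ℝ (Fin d) => wend (d / 2 + k + 1) k ‖x - y‖)) y) := by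
  intro y
  obtain ⟨hb₁, hb₂⟩ := wend_coeff_one_eq_zero_and_coeff_two_neg hk (by omega) hb
  have hpd (i : Fin d) :
      pd i (pd i fun x => wend (d / 2 + k + 1) k ‖x - y‖) y = 2 * b 2 :=
    pd_pd_comp_norm_sub_eq_two_mul_coeff (by omega) hb₁ hb y i
  exact ⟨by linarith [hpd j], hpd j, fun i => (hpd i).trans (hpd j).symm⟩

/-- for the radial Wendland function `Ψ_{ℓ,k}(x) = ψ_{ℓ,k}(‖x‖₂)` on `ℝ^d` with
`k ≥ 2` and `ℓ = ⌊d/2⌋ + k + 1`, the pure second partials at coincident points satisfy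
`∂_j ∂_j Ψ_{ℓ,k}(x-y)|_{x=y} < 0`, this value equals `2 b₂` (twice the quadratic coefficient
of the polynomial representation of `ψ_{ℓ,k}` on `[0,1]`), and it is independent of `j`. -/
theorem stmt9
    (d k : ℕ) (hd : 0 < d) (hk : 2 ≤ k)
    (b : ℕ → ℝ)
    (hb : ∀ r : ℝ, 0 ≤ r → r ≤ 1 →
      wend (d / 2 + k + 1) k r =
        ∑ m ∈ Finset.range (2 * k + (d / 2 + k + 1) + 1), b m * r ^ m)
    (j : Fin d) :
    (∀ y : EuclideanSpace ℝ (Fin d),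
      pd j (pd j (fun x : EuclideanSpace ℝ (Fin d) => wend (d / 2 + k + 1) k ‖x - y‖)) y < 0 ∧
      pd j (pd j (fun x : EuclideanSpace ℝ (Fin d) => wend (d / 2 + k + 1) k ‖x - y‖)) y =
        2 * b 2 ∧
      ∀ j' : Fin d,
        pd j' (pd j' (fun x : EuclideanSpace ℝ (Fin d) => wend (d / 2 + k + 1) k ‖x - y‖)) y =
          pd j (pd j (fun x : EuclideanSpace ℝ (Fin d) => wend (d / 2 + k + 1) k ‖x - y‖)) y) :=
  stmt9_general d k hk b hb j
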